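/- Let 0 < delta < 1 and let M be a delta-net (in trace norm) for the pure states on C^d. Define A as the supremum over all pairs of pure states and B as the supremum over pairs of elements of M of |(1/N) sum_i tr(U_i phi U_i^† psi) - 1/d|, for fixed unitaries U_1,...,U_N. Then A ≤ B + 2 delta (A + 1/d), and consequently if delta < 1/2 then A ≤ (1/(1-2 delta)) (B + 2 delta / d). -/

import Mathlib

open Matrix MeasureTheory
open scoped ComplexOrder

/-- Trace (nuclear) norm of a complex matrix: `tr √(Aᴴ A)`. -/
noncomputable def traceNorm {d : ℕ} (A : Matrix (Fin d) (Fin d) ℂ) : ℝ :=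
  (((Matrix.posSemidef_conjTranspose_mul_self A).1.eigenvectorUnitary.1 *
    diagonal (((↑) : ℝ → ℂ) ∘ (√·) ∘ (Matrix.posSemidef_conjTranspose_mul_self A).1.eigenvalues) *
    (star (Matrix.posSemidef_conjTranspose_mul_self A).1.eigenvectorUnitary :
      Matrix (Fin d) (Fin d) ℂ)).trace).re

/-- Operator (spectral) norm of a complex matrix. -/
noncomputable def opNorm {d : ℕ} (A : Matrix (Fin d) (Fin d) ℂ) : ℝ :=
  ‖Matrix.toEuclideanCLM (𝕜 := ℂ) A‖

/-- A mixed state: positive semidefinite with trace 1. -/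
def IsMixedState {d : ℕ} (A : Matrix (Fin d) (Fin d) ℂ) : Prop :=
  A.PosSemidef ∧ A.trace = 1

/-- A pure state: rank-one orthogonal projection `|x⟩⟨x|` for a unit vector `x`. -/
def IsPureState {d : ℕ} (A : Matrix (Fin d) (Fin d) ℂ) : Prop :=
  ∃ x : EuclideanSpace ℂ (Fin d), ‖x‖ = 1 ∧ A = Matrix.vecMulVec x (star x)

/-- The empirical quantity `(1/N) ∑ᵢ tr(Uᵢ φ Uᵢᴴ ψ) - 1/d`. -/
noncomputable def Fq {d N : ℕ} (U : Fin N → Matrix.unitaryGroup (Fin d) ℂ)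
    (φ ψ : Matrix (Fin d) (Fin d) ℂ) : ℝ :=
  (1 / (N : ℝ)) * ∑ i, (((U i : Matrix (Fin d) (Fin d) ℂ) * φ *
    (U i : Matrix (Fin d) (Fin d) ℂ)ᴴ * ψ).trace).re - 1 / (d : ℝ)

/-! Unlike `Fq U`, the unshifted average `β = avgOverlap U`, `β(φ, ψ) = Fq U φ ψ + 1/d`, is bilinear
over ℝ. Expanding a Hermitian `a` in its eigenbasis writes it as a combination of pure states with
coefficient mass `‖a‖₁`, so `|β(a, ψ)| ≤ ‖a‖₁ (A + 1/d)` whenever `ψ` is pure, and symmetrically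
in the second slot. For pure `φ, ψ` with net points `φ₀, ψ₀`,
`Fq φ ψ - Fq φ₀ ψ₀ = β(φ - φ₀, ψ) + β(φ₀, ψ - ψ₀)` is at most `2δ (A + 1/d)` in absolute value;
taking suprema gives the first bound, and rearranging it gives the second. -/

open scoped MatrixOrder

section

variable {d N : ℕ}

lemma IsPureState.isHermitian {φ : Matrix (Fin d) (Fin d) ℂ} (hφ : IsPureState φ) :
    φ.IsHermitian := by
  obtain ⟨x, -, rfl⟩ := hφ
  ext i j
  simp [vecMulVec_apply, mul_comm]

lemma IsPureState.conj_unitary {φ : Matrix (Fin d) (Fin d) ℂ} (hφ : IsPureState φ)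
    (V : unitaryGroup (Fin d) ℂ) :
    IsPureState ((V : Matrix (Fin d) (Fin d) ℂ) * φ * (V : Matrix (Fin d) (Fin d) ℂ)ᴴ) := by
  obtain ⟨x, hx, rfl⟩ := hφ
  have hV := Unitary.map_mem (toEuclideanCLM (n := Fin d) (𝕜 := ℂ)) V.2
  refine ⟨toEuclideanCLM (n := Fin d) (𝕜 := ℂ) V x,
    by rw [ContinuousLinearMap.norm_map_of_mem_unitary hV, hx], ?_⟩
  rw [ofLp_toEuclideanCLM, mul_vecMulVec, vecMulVec_mul, star_mulVec, conjTranspose]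

lemma IsPureState.abs_re_trace_mul_le_one {φ ψ : Matrix (Fin d) (Fin d) ℂ}
    (hφ : IsPureState φ) (hψ : IsPureState ψ) : |(φ * ψ).trace.re| ≤ 1 := by
  obtain ⟨x, hx, rfl⟩ := hφ
  obtain ⟨y, hy, rfl⟩ := hψ
  have hinner : (vecMulVec x.ofLp (star x.ofLp) * vecMulVec y.ofLp (star y.ofLp)).trace =
      inner ℂ x y * inner ℂ y x := by
    rw [vecMulVec_mul_vecMulVec, trace_vecMulVec, dotProduct_smul, smul_eq_mul, dotProduct_comm,
      EuclideanSpace.inner_eq_star_dotProduct, EuclideanSpace.inner_eq_star_dotProduct]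
  have hxy := norm_inner_le_norm (𝕜 := ℂ) x y
  have hyx := norm_inner_le_norm (𝕜 := ℂ) y x
  rw [hx, hy, one_mul] at hxy hyx
  calc _ ≤ ‖inner ℂ x y * inner ℂ y x‖ := hinner ▸ Complex.abs_re_le_norm _
    _ ≤ 1 := by rw [norm_mul]; exact mul_le_one₀ hxy (norm_nonneg _) hyx

lemma Matrix.IsHermitian.trace_cfc {n 𝕜 : Type*} [Fintype n] [DecidableEq n] [RCLike 𝕜]
    {A : Matrix n n 𝕜} (hA : A.IsHermitian) (f : ℝ → ℝ) :
    (hA.cfc f).trace = ∑ i, (f (hA.eigenvalues i) : 𝕜) := by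
  rw [IsHermitian.cfc, Unitary.conjStarAlgAut_apply, trace_mul_cycle, Unitary.coe_star_mul_self,
    one_mul, trace_diagonal]
  rfl

lemma Matrix.IsHermitian.eq_sum_eigenvalues_smul {n 𝕜 : Type*} [Fintype n] [DecidableEq n]
    [RCLike 𝕜] {A : Matrix n n 𝕜} (hA : A.IsHermitian) :
    A = ∑ j, (hA.eigenvalues j : 𝕜) •
      vecMulVec (hA.eigenvectorBasis j).ofLp (star (hA.eigenvectorBasis j).ofLp) := by
  conv_lhs => rw [hA.spectral_theorem, Unitary.conjStarAlgAut_apply]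
  ext i k
  simp [mul_apply, diagonal_apply, sum_apply, vecMulVec_apply, star_apply,
    IsHermitian.eigenvectorUnitary_apply, RCLike.real_smul_eq_coe_mul, mul_assoc, mul_comm,
    mul_left_comm]

lemma traceNorm_eq_re_trace_abs (A : Matrix (Fin d) (Fin d) ℂ) :
    traceNorm A = (CFC.abs A).trace.re := by
  have hA := posSemidef_conjTranspose_mul_self A
  rw [CFC.abs, star_eq_conjTranspose, CFC.sqrt_eq_real_sqrt _ hA.nonneg, cfcₙ_eq_cfc, hA.1.cfc_eq]
  rfl

lemma Matrix.IsHermitian.traceNorm_eq_sum_abs_eigenvalues {a : Matrix (Fin d) (Fin d) ℂ}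
    (ha : a.IsHermitian) : traceNorm a = ∑ j, |ha.eigenvalues j| := by
  rw [traceNorm_eq_re_trace_abs, CFC.abs_eq_cfc_norm a ha.isSelfAdjoint, ha.cfc_eq, ha.trace_cfc]
  simp

lemma abs_le_traceNorm_mul_of_isPureState (f : Matrix (Fin d) (Fin d) ℂ →ₗ[ℝ] ℝ) {C : ℝ}
    (hf : ∀ P, IsPureState P → |f P| ≤ C) {a : Matrix (Fin d) (Fin d) ℂ} (ha : a.IsHermitian) :
    |f a| ≤ traceNorm a * C := by
  set P : Fin d → Matrix (Fin d) (Fin d) ℂ := fun j =>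
    vecMulVec (ha.eigenvectorBasis j).ofLp (star (ha.eigenvectorBasis j).ofLp)
  have hP (j : Fin d) : IsPureState (P j) := ⟨_, ha.eigenvectorBasis.orthonormal.1 j, rfl⟩
  have hfa : f a = ∑ j, ha.eigenvalues j * f (P j) := by
    conv_lhs => rw [ha.eq_sum_eigenvalues_smul]
    simp only [← RCLike.real_smul_eq_coe_smul, map_sum, map_smul, smul_eq_mul, P]
  calc |f a| ≤ ∑ j, |ha.eigenvalues j| * |f (P j)| := by
        rw [hfa]
        exact (Finset.abs_sum_le_sum_abs _ _).trans_eq (by simp only [abs_mul])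
    _ ≤ ∑ j, |ha.eigenvalues j| * C :=
        Finset.sum_le_sum fun j _ => mul_le_mul_of_nonneg_left (hf _ (hP j)) (abs_nonneg _)
    _ = traceNorm a * C := by rw [ha.traceNorm_eq_sum_abs_eigenvalues, Finset.sum_mul]

noncomputable def avgOverlap (U : Fin N → unitaryGroup (Fin d) ℂ) :
    Matrix (Fin d) (Fin d) ℂ →ₗ[ℝ] Matrix (Fin d) (Fin d) ℂ →ₗ[ℝ] ℝ :=
  LinearMap.mk₂ ℝ (fun φ ψ => (1 / (N : ℝ)) * ∑ i,
      (((U i : Matrix (Fin d) (Fin d) ℂ) * φ * (U i : Matrix (Fin d) (Fin d) ℂ)ᴴ * ψ).trace).re)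
    (fun _ _ _ => by
      simp only [mul_add, add_mul, trace_add, Complex.add_re, Finset.sum_add_distrib])
    (fun _ _ _ => by
      simp only [Matrix.mul_smul, Matrix.smul_mul, trace_smul, Complex.smul_re, smul_eq_mul,
        Finset.mul_sum, mul_left_comm])
    (fun _ _ _ => by simp only [mul_add, trace_add, Complex.add_re, Finset.sum_add_distrib])
    (fun _ _ _ => by
      simp only [Matrix.mul_smul, trace_smul, Complex.smul_re, smul_eq_mul, Finset.mul_sum,
        mul_left_comm])

lemma Fq_eq_avgOverlap_sub (U : Fin N → unitaryGroup (Fin d) ℂ)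
    (φ ψ : Matrix (Fin d) (Fin d) ℂ) : Fq U φ ψ = avgOverlap U φ ψ - 1 / (d : ℝ) :=
  rfl

lemma abs_avgOverlap_le_one (U : Fin N → unitaryGroup (Fin d) ℂ)
    {φ ψ : Matrix (Fin d) (Fin d) ℂ} (hφ : IsPureState φ) (hψ : IsPureState ψ) :
    |avgOverlap U φ ψ| ≤ 1 := by
  have hterm (i : Fin N) := (hφ.conj_unitary (U i)).abs_re_trace_mul_le_one hψ
  calc |avgOverlap U φ ψ|
      ≤ 1 / (N : ℝ) * ∑ i, |(((U i : Matrix (Fin d) (Fin d) ℂ) * φ *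
          (U i : Matrix (Fin d) (Fin d) ℂ)ᴴ * ψ).trace).re| := by
        rw [avgOverlap, LinearMap.mk₂_apply, abs_mul, abs_of_nonneg (by positivity)]
        gcongr
        exact Finset.abs_sum_le_sum_abs _ _
    _ ≤ 1 / (N : ℝ) * N := by
        gcongr
        simpa using Finset.sum_le_sum fun i (_ : i ∈ Finset.univ) => hterm i
    _ ≤ 1 := by rw [one_div_mul_eq_div]; exact div_self_le_one _

lemma bddAbove_abs_Fq (U : Fin N → unitaryGroup (Fin d) ℂ) :
    BddAbove {t : ℝ | ∃ φ ψ : Matrix (Fin d) (Fin d) ℂ,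
      IsPureState φ ∧ IsPureState ψ ∧ t = |Fq U φ ψ|} := by
  refine ⟨1 + 1 / (d : ℝ), ?_⟩
  rintro _ ⟨φ, ψ, hφ, hψ, rfl⟩
  rw [Fq_eq_avgOverlap_sub]
  exact (abs_sub _ _).trans (by simpa using abs_avgOverlap_le_one U hφ hψ)

lemma abs_avgOverlap_le_abs_Fq_add (U : Fin N → unitaryGroup (Fin d) ℂ)
    (φ ψ : Matrix (Fin d) (Fin d) ℂ) : |avgOverlap U φ ψ| ≤ |Fq U φ ψ| + 1 / (d : ℝ) := by
  have h1d : |1 / (d : ℝ)| = 1 / d := abs_of_nonneg (by positivity)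
  simpa only [Fq_eq_avgOverlap_sub, sub_add_cancel, h1d] using abs_add_le (Fq U φ ψ) (1 / d)

lemma abs_Fq_le_abs_Fq_add_of_traceNorm_sub_le (U : Fin N → unitaryGroup (Fin d) ℂ) {A δ : ℝ}
    (hA : ∀ P Q, IsPureState P → IsPureState Q → |Fq U P Q| ≤ A)
    {φ ψ φ₀ ψ₀ : Matrix (Fin d) (Fin d) ℂ} (hφ : IsPureState φ) (hψ : IsPureState ψ)
    (hφ₀ : IsPureState φ₀) (hψ₀ : IsPureState ψ₀)
    (hφδ : traceNorm (φ - φ₀) ≤ δ) (hψδ : traceNorm (ψ - ψ₀) ≤ δ) :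
    |Fq U φ ψ| ≤ |Fq U φ₀ ψ₀| + 2 * δ * (A + 1 / (d : ℝ)) := by
  have hC (P Q) (hP : IsPureState P) (hQ : IsPureState Q) :
      |avgOverlap U P Q| ≤ A + 1 / (d : ℝ) :=
    (abs_avgOverlap_le_abs_Fq_add U P Q).trans (by gcongr; exact hA P Q hP hQ)
  have hC0 : 0 ≤ A + 1 / (d : ℝ) := (abs_nonneg _).trans (hC φ ψ hφ hψ)
  have hleft : |avgOverlap U (φ - φ₀) ψ| ≤ δ * (A + 1 / (d : ℝ)) :=
    (abs_le_traceNorm_mul_of_isPureState ((avgOverlap U).flip ψ) (fun P hP => hC P ψ hP hψ)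
      (hφ.isHermitian.sub hφ₀.isHermitian)).trans (by gcongr)
  have hright : |avgOverlap U φ₀ (ψ - ψ₀)| ≤ δ * (A + 1 / (d : ℝ)) :=
    (abs_le_traceNorm_mul_of_isPureState (avgOverlap U φ₀) (hC φ₀ · hφ₀)
      (hψ.isHermitian.sub hψ₀.isHermitian)).trans (by gcongr)
  have hsplit :
      Fq U φ ψ = Fq U φ₀ ψ₀ + avgOverlap U (φ - φ₀) ψ + avgOverlap U φ₀ (ψ - ψ₀) := by
    simp only [Fq_eq_avgOverlap_sub, map_sub, LinearMap.sub_apply]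
    ring
  rw [hsplit]
  linarith [abs_add_three (Fq U φ₀ ψ₀) (avgOverlap U (φ - φ₀) ψ) (avgOverlap U φ₀ (ψ - ψ₀))]

end

theorem stmt2_general (d N : ℕ) (U : Fin N → Matrix.unitaryGroup (Fin d) ℂ)
    (δ : ℝ) (hδ0 : 0 < δ)
    (M : Finset (Matrix (Fin d) (Fin d) ℂ))
    (hMpure : ∀ φ₀ ∈ M, IsPureState φ₀)
    (hnet : ∀ φ : Matrix (Fin d) (Fin d) ℂ, IsPureState φ →
      ∃ φ₀ ∈ M, traceNorm (φ - φ₀) ≤ δ)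
    (A B : ℝ)
    (hA : A = sSup {t : ℝ | ∃ φ ψ : Matrix (Fin d) (Fin d) ℂ,
      IsPureState φ ∧ IsPureState ψ ∧ t = |Fq U φ ψ|})
    (hB : B = sSup {t : ℝ | ∃ φ₀ ∈ M, ∃ ψ₀ ∈ M, t = |Fq U φ₀ ψ₀|}) :
    A ≤ B + 2 * δ * (A + 1 / (d : ℝ)) ∧
      (δ < 1 / 2 → A ≤ (1 / (1 - 2 * δ)) * (B + 2 * δ / (d : ℝ))) := by
  have hSA := bddAbove_abs_Fq U
  have hFA (φ ψ) (hφ : IsPureState φ) (hψ : IsPureState ψ) : |Fq U φ ψ| ≤ A :=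
    hA ▸ le_csSup hSA ⟨φ, ψ, hφ, hψ, rfl⟩
  have hFB (φ₀) (hφ₀ : φ₀ ∈ M) (ψ₀) (hψ₀ : ψ₀ ∈ M) : |Fq U φ₀ ψ₀| ≤ B := by
    refine hB ▸ le_csSup (hSA.mono ?_) ⟨φ₀, hφ₀, ψ₀, hψ₀, rfl⟩
    rintro _ ⟨φ₀, hφ₀, ψ₀, hψ₀, rfl⟩
    exact ⟨φ₀, ψ₀, hMpure φ₀ hφ₀, hMpure ψ₀ hψ₀, rfl⟩
  have hA0 : 0 ≤ A := hA ▸ Real.sSup_nonneg (by rintro _ ⟨_, _, _, _, rfl⟩; exact abs_nonneg _)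
  have hB0 : 0 ≤ B := hB ▸ Real.sSup_nonneg (by rintro _ ⟨_, _, _, _, rfl⟩; exact abs_nonneg _)
  have hmain : A ≤ B + 2 * δ * (A + 1 / (d : ℝ)) := by
    refine hA.trans_le (Real.sSup_le ?_ (by positivity))
    rintro _ ⟨φ, ψ, hφ, hψ, rfl⟩
    obtain ⟨φ₀, hφ₀, hφδ⟩ := hnet φ hφ
    obtain ⟨ψ₀, hψ₀, hψδ⟩ := hnet ψ hψ
    linarith [hFB φ₀ hφ₀ ψ₀ hψ₀, abs_Fq_le_abs_Fq_add_of_traceNorm_sub_le U hFA hφ hψ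
      (hMpure φ₀ hφ₀) (hMpure ψ₀ hψ₀) hφδ hψδ]
  refine ⟨hmain, fun hδ => ?_⟩
  rw [one_div_mul_eq_div, le_div_iff₀ (by linarith)]
  linear_combination hmain

theorem stmt2 (d N : ℕ) (hd : 0 < d) (U : Fin N → Matrix.unitaryGroup (Fin d) ℂ)
    (δ : ℝ) (hδ0 : 0 < δ) (hδ1 : δ < 1)
    (M : Finset (Matrix (Fin d) (Fin d) ℂ))
    (hMpure : ∀ φ₀ ∈ M, IsPureState φ₀)
    (hnet : ∀ φ : Matrix (Fin d) (Fin d) ℂ, IsPureState φ →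
      ∃ φ₀ ∈ M, traceNorm (φ - φ₀) ≤ δ)
    (A B : ℝ)
    (hA : A = sSup {t : ℝ | ∃ φ ψ : Matrix (Fin d) (Fin d) ℂ,
      IsPureState φ ∧ IsPureState ψ ∧ t = |Fq U φ ψ|})
    (hB : B = sSup {t : ℝ | ∃ φ₀ ∈ M, ∃ ψ₀ ∈ M, t = |Fq U φ₀ ψ₀|}) :
    A ≤ B + 2 * δ * (A + 1 / (d : ℝ)) ∧
      (δ < 1 / 2 → A ≤ (1 / (1 - 2 * δ)) * (B + 2 * δ / (d : ℝ))) :=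
  stmt2_general d N U δ hδ0 M hMpure hnet A B hA hB
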